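/- Sufficient envelope condition for the truncated-Lebesgue measure: let t, λ > 0, c = (1/t)exp(t²/2 − 1), and A(x) = e^{-x²/2} + c∫_{t-x}^∞ e^{-y²/2} dy for x ≥ 0. Then A'(x) = c·e^{-(t-x)²/2} − x·e^{-x²/2} ≥ 0 for all x ≥ 0, and hence A(x) ≥ A(0) ≥ 1 for all x ≥ 0. -/

import Mathlib

/-! The derivative of `A` is computed by the fundamental theorem of calculus. Its sign comes from
the tangent-line bound `t x ≤ e^{t x - 1}`: multiplying by `e^{-x²/2} / t` turns it into
`x e^{-x²/2} ≤ c e^{-(t-x)²/2}`, valid for every real `x`. Hence `A` is monotone, and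
`A 0 ≥ e^0 = 1` because the tail integral is nonnegative. -/

open MeasureTheory Real Set

theorem hasDerivAt_integral_Ici {E : Type*} [NormedAddCommGroup E] [NormedSpace ℝ E]
    [CompleteSpace E] {f : ℝ → E} {a : ℝ} (hf : Integrable f) (hfa : ContinuousAt f a) :
    HasDerivAt (fun u => ∫ y in Ici u, f y) (-f a) a := by
  have tail_split :
      (fun u => ∫ y in Ici u, f y) = fun u => (∫ y in u..a, f y) + ∫ y in Ioi a, f y := by
    funext u
    rw [integral_Ici_eq_integral_Ioi,
      intervalIntegral.integral_interval_add_Ioi hf.integrableOn hf.integrableOn]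
  rw [tail_split]
  exact (intervalIntegral.integral_hasDerivAt_left hf.intervalIntegrable
    hf.aestronglyMeasurable.stronglyMeasurableAtFilter hfa).add_const _

theorem integrable_exp_neg_sq_div_two : Integrable fun y : ℝ => exp (-y ^ 2 / 2) := by
  simpa [div_eq_inv_mul, neg_mul] using integrable_exp_neg_mul_sq (b := 1 / 2) (by norm_num)

theorem hasDerivAt_exp_neg_sq_div_two (x : ℝ) :
    HasDerivAt (fun x : ℝ => exp (-x ^ 2 / 2)) (-x * exp (-x ^ 2 / 2)) x := by
  have hexponent : HasDerivAt (fun x : ℝ => -x ^ 2 / 2) (-x) x :=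
    (((hasDerivAt_pow 2 x).neg).div_const 2).congr_deriv (by ring)
  exact ((Real.hasDerivAt_exp _).comp x hexponent).congr_deriv (mul_comm _ _)

theorem le_exp_mul_sub_one_div {t : ℝ} (ht : 0 < t) (x : ℝ) : x ≤ exp (t * x - 1) / t := by
  rw [le_div_iff₀ ht]
  linarith [add_one_le_exp (t * x - 1)]

theorem mul_exp_neg_sq_div_two_le {t : ℝ} (ht : 0 < t) (x : ℝ) :
    x * exp (-x ^ 2 / 2) ≤ 1 / t * exp (t ^ 2 / 2 - 1) * exp (-(t - x) ^ 2 / 2) :=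
  calc x * exp (-x ^ 2 / 2)
      ≤ exp (t * x - 1) / t * exp (-x ^ 2 / 2) :=
        mul_le_mul_of_nonneg_right (le_exp_mul_sub_one_div ht x) (exp_nonneg _)
    _ = 1 / t * exp (t ^ 2 / 2 - 1) * exp (-(t - x) ^ 2 / 2) := by
        rw [div_mul_eq_mul_div, mul_comm, ← exp_add, mul_assoc, ← exp_add]
        ring_nf

/-- The paper's `A(x)`, with the constant `c` left free. -/
noncomputable def gaussianTailEnvelope (c t x : ℝ) : ℝ :=
  exp (-x ^ 2 / 2) + c * ∫ y in Ici (t - x), exp (-y ^ 2 / 2)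

theorem hasDerivAt_gaussianTailEnvelope (c t x : ℝ) :
    HasDerivAt (gaussianTailEnvelope c t)
      (c * exp (-(t - x) ^ 2 / 2) - x * exp (-x ^ 2 / 2)) x := by
  have htail : HasDerivAt (fun x => ∫ y in Ici (t - x), exp (-y ^ 2 / 2))
      (exp (-(t - x) ^ 2 / 2)) x := by
    have hIci := hasDerivAt_integral_Ici integrable_exp_neg_sq_div_two
      (continuous_exp.comp (by fun_prop)).continuousAt (a := t - x)
    exact (hIci.comp x ((hasDerivAt_id x).const_sub t)).congr_deriv (by simp)
  exact ((hasDerivAt_exp_neg_sq_div_two x).add (htail.const_mul c)).congr_deriv (by ring)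

theorem monotone_gaussianTailEnvelope {t : ℝ} (ht : 0 < t) :
    Monotone (gaussianTailEnvelope (1 / t * exp (t ^ 2 / 2 - 1)) t) :=
  monotone_of_deriv_nonneg (fun x => (hasDerivAt_gaussianTailEnvelope _ t x).differentiableAt)
    fun x => (hasDerivAt_gaussianTailEnvelope _ t x).deriv ▸
      sub_nonneg.2 (mul_exp_neg_sq_div_two_le ht x)

theorem one_le_gaussianTailEnvelope_zero {c : ℝ} (hc : 0 ≤ c) (t : ℝ) :
    1 ≤ gaussianTailEnvelope c t 0 := by
  have htail : 0 ≤ ∫ y in Ici (t - 0), exp (-y ^ 2 / 2) :=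
    setIntegral_nonneg measurableSet_Ici fun y _ => (exp_pos _).le
  simpa [gaussianTailEnvelope] using mul_nonneg hc htail

/-- Sufficient envelope condition for the truncated-Lebesgue
measure: with `t > 0`, `c = (1/t)e^{t²/2 - 1}` and
`A(x) = e^{-x²/2} + c ∫_{t-x}^∞ e^{-y²/2} dy`, the derivative
`A'(x) = c e^{-(t-x)²/2} - x e^{-x²/2}` is nonnegative on `x ≥ 0`, and hence
`A(x) ≥ A(0) ≥ 1` for all `x ≥ 0`. -/
theorem spike_tails_derivative_nonneg (t : ℝ) (ht : 0 < t) :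
    (∀ x : ℝ, 0 ≤ x →
      HasDerivAt (fun x : ℝ =>
          Real.exp (-x ^ 2 / 2)
            + (1 / t) * Real.exp (t ^ 2 / 2 - 1)
              * ∫ y in Set.Ici (t - x), Real.exp (-y ^ 2 / 2))
        ((1 / t) * Real.exp (t ^ 2 / 2 - 1) * Real.exp (-(t - x) ^ 2 / 2)
          - x * Real.exp (-x ^ 2 / 2)) x) ∧
    (∀ x : ℝ, 0 ≤ x →
      0 ≤ (1 / t) * Real.exp (t ^ 2 / 2 - 1) * Real.exp (-(t - x) ^ 2 / 2)
          - x * Real.exp (-x ^ 2 / 2)) ∧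
    1 ≤ Real.exp (-(0 : ℝ) ^ 2 / 2)
          + (1 / t) * Real.exp (t ^ 2 / 2 - 1)
            * ∫ y in Set.Ici (t - 0), Real.exp (-y ^ 2 / 2) ∧
    (∀ x : ℝ, 0 ≤ x →
      Real.exp (-(0 : ℝ) ^ 2 / 2)
          + (1 / t) * Real.exp (t ^ 2 / 2 - 1)
            * ∫ y in Set.Ici (t - 0), Real.exp (-y ^ 2 / 2)
        ≤ Real.exp (-x ^ 2 / 2)
          + (1 / t) * Real.exp (t ^ 2 / 2 - 1)
            * ∫ y in Set.Ici (t - x), Real.exp (-y ^ 2 / 2)) := by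
  refine ⟨fun x _ => hasDerivAt_gaussianTailEnvelope _ t x,
    fun x _ => sub_nonneg.2 (mul_exp_neg_sq_div_two_le ht x),
    one_le_gaussianTailEnvelope_zero (by positivity) t,
    fun x hx => monotone_gaussianTailEnvelope ht hx⟩
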